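/- In HC_n, set R^Ψ_i := (c_i − c_{i+1}) T_i + (v−1) c_{i+1} for 1 ≤ i ≤ n−1. Let σ ∈ S_n with a reduced expression σ = s_{i_1}⋯s_{i_k}, and set R^Ψ_{σ̲} := R^Ψ_{i_1}⋯R^Ψ_{i_k}. Let I ⊆ {1,…,n} be a nonempty subset such that k + |I| is even. Then R^Ψ_{σ̲} C_I lies in [HC_n, HC_n]. (This is the statement, transported through the isomorphism HC_n ≅ sH_n ⊗ Cl_n of Wang, that an even element R_{σ̲} C_I of the spin Hecke–Clifford superalgebra with I nonempty lies in the commutator subspace.) -/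

import Mathlib

/-!
Each `R^Ψ_i` anticommutes with every `c_j`: the correction term `(v - 1) c_{i+1}` exactly
compensates for `T_i c_{i+1} = c_i T_i + (v - 1)(c_{i+1} - c_i)`. Hence for `j ∈ I`, conjugation
by the involution `c_j` multiplies `x = R^Ψ_σ C_I` by `(-1)^(k + |I| - 1) = -1`, and the
commutator `[c_j x, c_j] = c_j x c_j - x = -2x` puts `x` in `[HC_n, HC_n]` since `2` is a unit.
-/

noncomputable section

/-- The ring `ℤ[1/2]`. -/
abbrev Zh : Type := Localization.Away (2 : ℤ)

/-- The ring `A = ℤ[1/2][v, v⁻¹]` of Laurent polynomials over `ℤ[1/2]`. -/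
def Av : Type := LaurentPolynomial Zh

noncomputable instance : CommRing Av := inferInstanceAs (CommRing (LaurentPolynomial Zh))

/-- The indeterminate `v ∈ A`. -/
def vA : Av := (LaurentPolynomial.T 1 : LaurentPolynomial Zh)

/-- Generators of the Hecke–Clifford algebra: `T i` (0-based, for `T_{i+1}` of the paper,
`i = 0, …, n-2`) and `c j` (0-based, for `c_{j+1}`, `j = 0, …, n-1`). -/
inductive HCgen (n : ℕ) : Type
  | T : Fin (n - 1) → HCgen n
  | c : Fin n → HCgen n

/-- For a `T`-index `i`, the `c`-index of the first strand that `T_i` involves. -/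
def lo {n : ℕ} (i : Fin (n - 1)) : Fin n := ⟨i.1, by have := i.2; omega⟩

/-- For a `T`-index `i`, the `c`-index of the second strand that `T_i` involves. -/
def hi {n : ℕ} (i : Fin (n - 1)) : Fin n := ⟨i.1 + 1, by have := i.2; omega⟩

/-- The defining relations of the Hecke–Clifford algebra. -/
inductive HCrel (n : ℕ) : FreeAlgebra Av (HCgen n) → FreeAlgebra Av (HCgen n) → Prop
  | quad (i : Fin (n - 1)) :
      HCrel n ((FreeAlgebra.ι Av (HCgen.T i) - algebraMap Av (FreeAlgebra Av (HCgen n)) vA) *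
        (FreeAlgebra.ι Av (HCgen.T i) + 1)) 0
  | Tcomm (i j : Fin (n - 1)) (h : i.1 + 1 < j.1) :
      HCrel n (FreeAlgebra.ι Av (HCgen.T i) * FreeAlgebra.ι Av (HCgen.T j))
        (FreeAlgebra.ι Av (HCgen.T j) * FreeAlgebra.ι Av (HCgen.T i))
  | braid (i j : Fin (n - 1)) (h : i.1 + 1 = j.1) :
      HCrel n (FreeAlgebra.ι Av (HCgen.T i) * FreeAlgebra.ι Av (HCgen.T j) *
          FreeAlgebra.ι Av (HCgen.T i))
        (FreeAlgebra.ι Av (HCgen.T j) * FreeAlgebra.ι Av (HCgen.T i) *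
          FreeAlgebra.ι Av (HCgen.T j))
  | csq (i : Fin n) :
      HCrel n (FreeAlgebra.ι Av (HCgen.c i) * FreeAlgebra.ι Av (HCgen.c i)) 1
  | canti (i j : Fin n) (h : i ≠ j) :
      HCrel n (FreeAlgebra.ι Av (HCgen.c i) * FreeAlgebra.ι Av (HCgen.c j))
        (-(FreeAlgebra.ι Av (HCgen.c j) * FreeAlgebra.ι Av (HCgen.c i)))
  | Tccomm (i : Fin (n - 1)) (j : Fin n) (h1 : j ≠ lo i) (h2 : j ≠ hi i) :
      HCrel n (FreeAlgebra.ι Av (HCgen.T i) * FreeAlgebra.ι Av (HCgen.c j))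
        (FreeAlgebra.ι Av (HCgen.c j) * FreeAlgebra.ι Av (HCgen.T i))
  | Tc (i : Fin (n - 1)) :
      HCrel n (FreeAlgebra.ι Av (HCgen.T i) * FreeAlgebra.ι Av (HCgen.c (lo i)))
        (FreeAlgebra.ι Av (HCgen.c (hi i)) * FreeAlgebra.ι Av (HCgen.T i))

/-- The Hecke–Clifford algebra `HC_n` over `A`. -/
abbrev HC (n : ℕ) : Type := RingQuot (HCrel n)

/-- The generator `T_i` of `HC_n` (`0`-based index). -/
def Tg {n : ℕ} (i : Fin (n - 1)) : HC n :=
  RingQuot.mkAlgHom Av (HCrel n) (FreeAlgebra.ι Av (HCgen.T i))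

/-- The generator `c_j` of `HC_n` (`0`-based index). -/
def cg {n : ℕ} (j : Fin n) : HC n :=
  RingQuot.mkAlgHom Av (HCrel n) (FreeAlgebra.ι Av (HCgen.c j))

/-- `T_{i_1} ⋯ T_{i_k}` for a word `L = [i_1, …, i_k]`. -/
def Tw {n : ℕ} (L : List (Fin (n - 1))) : HC n := (L.map Tg).prod

/-- `C_I = c_{i_1} ⋯ c_{i_k}` for a subset `I = {i_1 < ⋯ < i_k}`. -/
def Cset {n : ℕ} (I : Finset (Fin n)) : HC n := ((I.sort (· ≤ ·)).map cg).prod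

/-- The `A`-submodule `[HC_n, HC_n]` spanned by all commutators. -/
def commSpan (n : ℕ) : Submodule Av (HC n) :=
  Submodule.span Av {x : HC n | ∃ a b : HC n, x = a * b - b * a}

/-- The simple transposition `s_i = (i+1, i+2)` (paper numbering) in `S_n`. -/
def sgen {n : ℕ} (i : Fin (n - 1)) : Equiv.Perm (Fin n) := Equiv.swap (lo i) (hi i)

/-- The product of the simple transpositions along a word. -/
def wordProd {n : ℕ} (L : List (Fin (n - 1))) : Equiv.Perm (Fin n) := (L.map sgen).prod

/-- The Coxeter length of a permutation: the minimal length of a word in the simple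
transpositions expressing it. -/
def plen {n : ℕ} (σ : Equiv.Perm (Fin n)) : ℕ :=
  sInf {k | ∃ L : List (Fin (n - 1)), wordProd L = σ ∧ L.length = k}

/-- `L` is a reduced expression of `σ`. -/
def IsReducedWord {n : ℕ} (σ : Equiv.Perm (Fin n)) (L : List (Fin (n - 1))) : Prop :=
  wordProd L = σ ∧ L.length = plen σ

/-- The canonical reduced word of the permutation `w_γ` attached to a composition `γ` of `n`:
the increasing list of all `0`-based `T`-indices `i ∈ {0, …, n-2}` such that `i+1` is not a
partial sum of `γ`. -/
def compWord {n : ℕ} (γ : Composition n) : List (Fin (n - 1)) :=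
  (List.finRange (n - 1)).filter (fun i => i.1 + 1 ∉ γ.blocks.scanl (· + ·) 0)

/-- The element `T_{w_γ}` of `HC_n` for a composition `γ` of `n`. -/
def Twγ {n : ℕ} (γ : Composition n) : HC n := Tw (compWord γ)

/-- The permutation `w_γ` attached to a composition `γ` of `n`. -/
def wγ {n : ℕ} (γ : Composition n) : Equiv.Perm (Fin n) := wordProd (compWord γ)

/-- A composition is a partition if its parts are weakly decreasing. -/
def IsPartitionC {n : ℕ} (γ : Composition n) : Prop := γ.blocks.Pairwise (· ≥ ·)

/-- An odd partition: a partition all of whose parts are odd. -/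
def IsOddPartitionC {n : ℕ} (γ : Composition n) : Prop :=
  IsPartitionC γ ∧ ∀ p ∈ γ.blocks, Odd p

instance {n : ℕ} (γ : Composition n) : Decidable (IsOddPartitionC γ) := by
  unfold IsOddPartitionC IsPartitionC
  infer_instance

/-- A trace function on `HC_n`: an `A`-linear map that is symmetric on products and vanishes
on the odd part, i.e. on all elements `T_σ C_I` with `|I|` odd (with `T_σ` given by any
reduced expression of `σ`). -/
def IsTraceFun {n : ℕ} (φ : HC n →ₗ[Av] Av) : Prop :=
  (∀ a b : HC n, φ (a * b) = φ (b * a)) ∧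
  ∀ L : List (Fin (n - 1)), IsReducedWord (wordProd L) L →
    ∀ I : Finset (Fin n), Odd I.card → φ (Tw L * Cset I) = 0

/-- The element `(v - 1)/2 ∈ A`. -/
def halfvm1 : Av := Ring.inverse (2 : Av) * (vA - 1)


/-- The element `R^Ψ_i = (c_i - c_{i+1}) T_i + (v-1) c_{i+1}` of `HC_n`. -/
def Rpsi {n : ℕ} (i : Fin (n - 1)) : HC n :=
  (cg (lo i) - cg (hi i)) * Tg i + (vA - 1) • cg (hi i)

/-- The quadratic relation makes `t` invertible, `q t⁻¹ = t - (q - 1)`, so `b = t a t⁻¹`. -/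
theorem mul_eq_of_quadratic {R B : Type*} [CommRing R] [Ring B] [Algebra R B] {q : R}
    (hq : IsUnit q) {t a b : B} (htt : t * t = (q - 1) • t + q • 1) (hta : t * a = b * t) :
    t * b = a * t + (q - 1) • (b - a) := by
  set s := t - (q - 1) • 1
  have hts : t * s = q • 1 := by
    rw [mul_sub, htt, mul_smul_comm, mul_one]; abel
  have hb : q • b = t * a * s := by
    rw [hta, mul_assoc, hts, mul_smul_comm, mul_one]
  refine (hq.smul_left_cancel).mp ?_
  calc q • (t * b) = t * t * a * s := by rw [← mul_smul_comm, hb]; simp only [mul_assoc]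
    _ = (q - 1) • (t * a * s) + q • (a * s) := by
        rw [htt]; simp only [add_mul, smul_mul_assoc, one_mul]
    _ = q • (a * t + (q - 1) • (b - a)) := by
        rw [← hb]; simp only [s, mul_sub, mul_smul_comm, mul_one]; module

section Relations

variable {n : ℕ}

theorem cg_mul_self (j : Fin n) : cg j * cg j = (1 : HC n) := by
  simpa [cg] using RingQuot.mkAlgHom_rel Av (HCrel.csq j)

theorem cg_mul_cg_of_ne {j k : Fin n} (h : j ≠ k) : cg j * cg k = -(cg k * cg j) := by
  simpa [cg] using RingQuot.mkAlgHom_rel Av (HCrel.canti j k h)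

theorem Tg_mul_cg_lo (i : Fin (n - 1)) : Tg i * cg (lo i) = cg (hi i) * Tg i := by
  simpa [cg, Tg] using RingQuot.mkAlgHom_rel Av (HCrel.Tc i)

theorem Tg_mul_cg_of_ne (i : Fin (n - 1)) {j : Fin n} (hlo : j ≠ lo i) (hhi : j ≠ hi i) :
    Tg i * cg j = cg j * Tg i := by
  simpa [cg, Tg] using RingQuot.mkAlgHom_rel Av (HCrel.Tccomm i j hlo hhi)

theorem Tg_mul_self (i : Fin (n - 1)) : Tg i * Tg i = (vA - 1) • Tg i + vA • (1 : HC n) := by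
  have h := RingQuot.mkAlgHom_rel Av (HCrel.quad i)
  simp only [map_mul, map_sub, map_add, map_one, map_zero, map_smul,
    Algebra.algebraMap_eq_smul_one] at h
  change (Tg i - vA • 1) * (Tg i + 1) = 0 at h
  rw [← sub_eq_zero, ← h]
  simp only [sub_mul, mul_add, smul_mul_assoc, one_mul, mul_one]
  module

theorem Tg_mul_cg_hi (i : Fin (n - 1)) :
    Tg i * cg (hi i) = cg (lo i) * Tg i + (vA - 1) • (cg (hi i) - cg (lo i)) :=
  mul_eq_of_quadratic (LaurentPolynomial.isUnit_T 1) (Tg_mul_self i) (Tg_mul_cg_lo i)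

theorem lo_ne_hi (i : Fin (n - 1)) : lo i ≠ hi i := by
  simp [lo, hi, Fin.ext_iff]

theorem cg_mul_cg_mul_self (j : Fin n) (x : HC n) : cg j * (cg j * x) = x := by
  rw [← mul_assoc, cg_mul_self, one_mul]

theorem cg_mul_cg_mul_of_ne {j k : Fin n} (h : j ≠ k) (x : HC n) :
    cg j * (cg k * x) = -(cg k * (cg j * x)) := by
  rw [← mul_assoc, cg_mul_cg_of_ne h]
  -- `-` on `HC n` is `RingQuot.instNeg`, which `rw [neg_mul]` does not match syntactically.
  exact (neg_mul (cg k * cg j) x).trans (congrArg Neg.neg (mul_assoc (cg k) (cg j) x))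

theorem Rpsi_mul_cg_lo (i : Fin (n - 1)) : Rpsi i * cg (lo i) = -(cg (lo i) * Rpsi i) := by
  have hba := cg_mul_cg_of_ne (lo_ne_hi i).symm
  simp only [Rpsi, sub_mul, add_mul, mul_sub, mul_add, smul_mul_assoc, mul_smul_comm, mul_assoc,
    Tg_mul_cg_lo, cg_mul_cg_mul_self, hba]
  module

theorem Rpsi_mul_cg_hi (i : Fin (n - 1)) : Rpsi i * cg (hi i) = -(cg (hi i) * Rpsi i) := by
  have hba := cg_mul_cg_of_ne (lo_ne_hi i).symm
  simp only [Rpsi, sub_mul, add_mul, mul_sub, mul_add, smul_mul_assoc, mul_smul_comm,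
    mul_assoc, Tg_mul_cg_hi, cg_mul_cg_mul_self, cg_mul_self, hba, smul_sub]
  module

theorem Rpsi_mul_cg_of_ne (i : Fin (n - 1)) {j : Fin n} (hlo : j ≠ lo i) (hhi : j ≠ hi i) :
    Rpsi i * cg j = -(cg j * Rpsi i) := by
  simp only [Rpsi, sub_mul, add_mul, mul_sub, mul_add, smul_mul_assoc, mul_smul_comm, mul_assoc,
    Tg_mul_cg_of_ne i hlo hhi, cg_mul_cg_mul_of_ne (Ne.symm hlo), cg_mul_cg_mul_of_ne (Ne.symm hhi),
    cg_mul_cg_of_ne (Ne.symm hhi)]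
  module

theorem Rpsi_mul_cg (i : Fin (n - 1)) (j : Fin n) : Rpsi i * cg j = -(cg j * Rpsi i) := by
  by_cases hlo : j = lo i
  · exact hlo ▸ Rpsi_mul_cg_lo i
  by_cases hhi : j = hi i
  · exact hhi ▸ Rpsi_mul_cg_hi i
  exact Rpsi_mul_cg_of_ne i hlo hhi

end Relations

theorem isUnit_two_Av : IsUnit (2 : Av) := by
  have h := (IsLocalization.Away.algebraMap_isUnit (S := Zh) (2 : ℤ)).map
    (algebraMap Zh (LaurentPolynomial Zh))
  rwa [map_ofNat, map_ofNat] at h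

section Conjugation

variable {n : ℕ}

def cgConj (j : Fin n) : HC n →* HC n where
  toFun x := cg j * x * cg j
  map_one' := by rw [mul_one, cg_mul_self]
  map_mul' x y := by simp only [mul_assoc, cg_mul_cg_mul_self]

theorem cgConj_apply (j : Fin n) (x : HC n) : cgConj j x = cg j * x * cg j := rfl

theorem cgConj_cg (j : Fin n) : cgConj j (cg j) = cg j := by
  rw [cgConj_apply, cg_mul_self, one_mul]

theorem cgConj_eq_neg_of_mul_cg {j : Fin n} {x : HC n} (h : x * cg j = -(cg j * x)) :
    cgConj j x = -x := by
  rw [cgConj_apply, mul_assoc, h]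
  exact (mul_neg (cg j) (cg j * x)).trans (congrArg Neg.neg (cg_mul_cg_mul_self j x))

theorem cgConj_list_prod_of_forall_eq_neg (j : Fin n) {l : List (HC n)}
    (h : ∀ y ∈ l, cgConj j y = -y) : cgConj j l.prod = ((-1 : ℤ) ^ l.length) • l.prod := by
  rw [map_list_prod, List.map_congr_left h, zsmul_eq_mul]
  push_cast
  exact List.prod_map_neg l

theorem cgConj_Rpsi_prod (j : Fin n) (L : List (Fin (n - 1))) :
    cgConj j (L.map Rpsi).prod = ((-1 : ℤ) ^ L.length) • (L.map Rpsi).prod := by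
  rw [cgConj_list_prod_of_forall_eq_neg j, List.length_map]
  simp only [List.forall_mem_map]
  intro i _
  exact cgConj_eq_neg_of_mul_cg (Rpsi_mul_cg i j)

theorem cgConj_cg_list_prod {j : Fin n} {l : List (Fin n)} (hj : j ∉ l) :
    cgConj j (l.map cg).prod = ((-1 : ℤ) ^ l.length) • (l.map cg).prod := by
  rw [cgConj_list_prod_of_forall_eq_neg j, List.length_map]
  simp only [List.forall_mem_map]
  intro k hk
  exact cgConj_eq_neg_of_mul_cg (cg_mul_cg_of_ne (ne_of_mem_of_not_mem hk hj))

theorem cgConj_Cset {j : Fin n} {I : Finset (Fin n)} (hj : j ∈ I) :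
    cgConj j (Cset I) = ((-1 : ℤ) ^ (I.card - 1)) • Cset I := by
  obtain ⟨P, Q, hPQ⟩ := List.append_of_mem ((I.mem_sort (· ≤ ·)).mpr hj)
  have hnd := I.sort_nodup (· ≤ ·)
  have hlen := I.length_sort (· ≤ ·)
  rw [hPQ] at hnd hlen
  simp only [List.nodup_append, List.nodup_cons] at hnd
  simp only [List.length_append, List.length_cons] at hlen
  have hjP : j ∉ P := by tauto
  have hjQ : j ∉ Q := by tauto
  rw [Cset, hPQ, List.map_append, List.map_cons, List.prod_append, List.prod_cons, map_mul, map_mul,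
    cgConj_cg, cgConj_cg_list_prod hjP, cgConj_cg_list_prod hjQ,
    smul_mul_assoc, mul_smul_comm, mul_smul_comm, smul_smul, ← pow_add]
  congr 2
  omega

theorem mem_commSpan_of_cgConj_eq_neg (j : Fin n) {x : HC n} (h : cgConj j x = -x) :
    x ∈ commSpan n := by
  have hcomm : cg j * x * cg j - cg j * (cg j * x) ∈ commSpan n :=
    Submodule.subset_span ⟨cg j * x, cg j, rfl⟩
  rw [← cgConj_apply, h, cg_mul_cg_mul_self, sub_eq_add_neg, ← neg_add, ← two_smul Av x,
    neg_mem_iff] at hcomm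
  exact (Submodule.smul_mem_iff_of_isUnit _ isUnit_two_Av).mp hcomm

end Conjugation

theorem statement_13_general (n : ℕ) (L : List (Fin (n - 1))) (I : Finset (Fin n))
    (hne : I.Nonempty) (hpar : Even (L.length + I.card)) :
    (L.map Rpsi).prod * Cset I ∈ commSpan n := by
  obtain ⟨j, hj⟩ := hne
  have hodd : Odd (L.length + (I.card - 1)) := by
    have hcard := I.card_pos.mpr ⟨j, hj⟩
    rw [Nat.odd_iff]
    rw [Nat.even_iff] at hpar
    omega
  refine mem_commSpan_of_cgConj_eq_neg j ?_
  rw [map_mul, cgConj_Rpsi_prod, cgConj_Cset hj, smul_mul_smul_comm, ← pow_add, hodd.neg_one_pow,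
    neg_one_smul]

/-- For a reduced expression `σ = s_{i_1} ⋯ s_{i_k}` and a nonempty
`I ⊆ [n]` with `k + |I|` even, the element `R^Ψ_{i_1} ⋯ R^Ψ_{i_k} C_I` lies in
`[HC_n, HC_n]`. -/
theorem statement_13 (n : ℕ) (hn : 1 ≤ n) (σ : Equiv.Perm (Fin n))
    (L : List (Fin (n - 1))) (hL : IsReducedWord σ L) (I : Finset (Fin n))
    (hne : I.Nonempty) (hpar : Even (L.length + I.card)) :
    (L.map Rpsi).prod * Cset I ∈ commSpan n :=
  statement_13_general n L I hne hpar

end
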